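/- arXiv:1712.02519 — 2 statements merged into one kernel-verified Lean document; each statement's English description precedes it below -/
import Mathlib

section
/- Let the parameter space be a product Θ = ∏_{j=1}^m Θ_j with 1 ≤ m ≤ ∞, and let S_MF = {Q : Q = ⊗_{j=1}^m Q_j} be the mean-field class. Suppose there exist Q̃ = ⊗_{j=1}^m Q̃_j ∈ S_MF, measurable subsets Θ̃_j ⊆ Θ_j, and constants C1, C2, C3 > 0 such that: (i) ⊗_{j=1}^m Θ̃_j ⊆ {θ : D(P_0⁽ⁿ⁾‖P_θ⁽ⁿ⁾) ≤ C1 n ε_n² and log (dQ̃/dΠ)(θ) ≤ C2 n ε_n²}; and (ii) −Σ_{j=1}^m log Q̃_j(Θ̃_j) ≤ C3 n ε_n². Then inf_{Q∈S_MF} R(Q) ≤ (C1 + C2 + C3) ε_n², where R(Q) = n⁻¹ ( D(Q‖Π) + ∫ D(P_0⁽ⁿ⁾‖P_θ⁽ⁿ⁾) dQ(θ) ). -/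
/-!
Take for `Q` the mean-field prior `Q̃` conditioned on the rectangle `A = ∏ⱼ Θ̃ⱼ`. Conditioning
independent coordinates on a rectangle keeps them independent, so `Q` is again mean-field. By
independence and continuity from above, `Q̃(A) = ∏ⱼ Q̃ⱼ(Θ̃ⱼ) ≥ exp (-C₃ n εₙ²)`. On `A` we have
`dQ/dΠ = (dQ̃/dΠ) / Q̃(A)`, so `log dQ/dΠ ≤ (C₂ + C₃) n εₙ²` there, which bounds `D(Q‖Π)`;
and `Q` lives on `A`, where `D(P₀‖P_θ) ≤ C₁ n εₙ²`.
-/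

open MeasureTheory ProbabilityTheory Real
open scoped ENNReal NNReal

noncomputable section

open scoped Classical in
def KLdiv {Ω : Type*} [MeasurableSpace Ω] (P Q : Measure Ω) : ℝ≥0∞ :=
  if P ≪ Q ∧ Integrable (llr P Q) P then ENNReal.ofReal (∫ x, llr P Q x ∂P) else ⊤

/-- A probability measure on a product space belongs to the mean-field class iff the
coordinates are independent under it, i.e. it is a product of its marginals. -/
def isMeanField {ι : Type*} {Θj : ι → Type*} [∀ j, MeasurableSpace (Θj j)]
    (Q : Measure (∀ j, Θj j)) : Prop :=
  IsProbabilityMeasure Q ∧ iIndepFun (fun j θ => θ j) Q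

namespace ProbabilityTheory

variable {Ω ι : Type*} [MeasurableSpace Ω] {μ : Measure Ω} {β : ι → Type*}
  [∀ i, MeasurableSpace (β i)] {f : ∀ i, Ω → β i} {s : ∀ i, Set (β i)}

theorem iIndepFun.measure_iInter_preimage_eq_prod_mul [Countable ι] (h : iIndepFun f μ)
    (hf : ∀ i, Measurable (f i)) (hs : ∀ i, MeasurableSet (s i)) (S : Finset ι) :
    μ (⋂ i, f i ⁻¹' s i) = (∏ i ∈ S, μ (f i ⁻¹' s i)) * μ (⋂ i ∉ S, f i ⁻¹' s i) := by
  have hsplit : (⋂ i, f i ⁻¹' s i) = (⋂ i ∈ S, f i ⁻¹' s i) ∩ ⋂ i ∉ S, f i ⁻¹' s i := by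
    ext x; simp only [Set.mem_iInter, Set.mem_inter_iff]; grind
  have hmeas (T : Set ι) : MeasurableSet[⨆ i ∈ T, MeasurableSpace.comap (f i) inferInstance]
      (⋂ i ∈ T, f i ⁻¹' s i) :=
    .biInter T.to_countable fun i hi =>
      le_iSup₂ (f := fun i (_ : i ∈ T) => MeasurableSpace.comap (f i) inferInstance) i hi
        _ ⟨s i, hs i, rfl⟩
  have hindep := indep_iSup_of_disjoint (fun i => (hf i).comap_le)
    ((iIndepFun_iff_iIndep _ _ _).1 h) (disjoint_compl_right (a := (S : Set ι)))
  have hprod := (Indep_iff _ _ _).1 hindep _ _ (hmeas S) (hmeas (↑S)ᶜ)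
  simp only [Finset.mem_coe, Set.mem_compl_iff] at hprod
  rw [hsplit, hprod, h.measure_inter_preimage_eq_mul S fun i _ => hs i]

theorem iIndepFun.cond_biInter_preimage_eq_prod [Countable ι] (h : iIndepFun f μ)
    (hf : ∀ i, Measurable (f i)) (hs : ∀ i, MeasurableSet (s i))
    (hμs : μ (⋂ i, f i ⁻¹' s i) ≠ 0) (S : Finset ι) {C : ∀ i, Set (β i)}
    (hC : ∀ i ∈ S, MeasurableSet (C i)) :
    μ[⋂ i ∈ S, f i ⁻¹' C i | ⋂ i, f i ⁻¹' s i] = ∏ i ∈ S, μ[f i ⁻¹' C i | f i ⁻¹' s i] := by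
  classical
  have := h.isProbabilityMeasure
  set D : ∀ i, Set (β i) := S.piecewise (fun i => s i ∩ C i) s
  have hmemD (i : ι) (x : Ω) : x ∈ f i ⁻¹' D i ↔ f i x ∈ s i ∧ (i ∈ S → f i x ∈ C i) := by
    by_cases hi : i ∈ S <;> simp [D, hi]
  have hD (i : ι) : MeasurableSet (D i) := by
    by_cases hi : i ∈ S
    · simpa [D, hi] using (hs i).inter (hC i hi)
    · simpa [D, hi] using hs i
  have hinter : (⋂ i, f i ⁻¹' s i) ∩ (⋂ i ∈ S, f i ⁻¹' C i) = ⋂ i, f i ⁻¹' D i := by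
    ext x
    simp only [Set.mem_inter_iff, Set.mem_iInter, hmemD, forall_and, Set.mem_preimage]
  have hout : (⋂ i ∉ S, f i ⁻¹' D i) = ⋂ i ∉ S, f i ⁻¹' s i :=
    Set.iInter₂_congr fun i hi => by simp [D, hi]
  have hout_ne : μ (⋂ i ∉ S, f i ⁻¹' s i) ≠ 0 := fun h0 => hμs <| measure_mono_null
    (fun x hx => Set.mem_iInter₂.2 fun i _ => Set.mem_iInter.1 hx i) h0
  rw [cond_apply (.iInter fun i => hf i (hs i)), hinter,
    h.measure_iInter_preimage_eq_prod_mul hf hs S, h.measure_iInter_preimage_eq_prod_mul hf hD S,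
    hout, ENNReal.mul_inv (.inr (measure_ne_top _ _)) (.inr hout_ne),
    ENNReal.prod_inv_distrib fun _ _ _ _ _ => .inr (measure_ne_top _ _)]
  calc _ = (∏ i ∈ S, (μ (f i ⁻¹' s i))⁻¹) * (∏ i ∈ S, μ (f i ⁻¹' D i)) *
        ((μ (⋂ i ∉ S, f i ⁻¹' s i))⁻¹ * μ (⋂ i ∉ S, f i ⁻¹' s i)) := by ring
    _ = ∏ i ∈ S, (μ (f i ⁻¹' s i))⁻¹ * μ (f i ⁻¹' s i ∩ f i ⁻¹' C i) := by
      rw [ENNReal.inv_mul_cancel hout_ne (measure_ne_top _ _), mul_one, ← Finset.prod_mul_distrib]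
      exact Finset.prod_congr rfl fun i hi => by simp [D, hi]
    _ = _ := Finset.prod_congr rfl fun i _ => (cond_apply (hf i (hs i)) _ _).symm

theorem iIndepFun.cond_iInter_preimage [Countable ι] (h : iIndepFun f μ)
    (hf : ∀ i, Measurable (f i)) (hs : ∀ i, MeasurableSet (s i))
    (hμs : μ (⋂ i, f i ⁻¹' s i) ≠ 0) : iIndepFun f μ[|⋂ i, f i ⁻¹' s i] := by
  refine (iIndepFun_iff_measure_inter_preimage_eq_mul).2 fun S C hC => ?_
  rw [h.cond_biInter_preimage_eq_prod hf hs hμs S hC]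
  refine Finset.prod_congr rfl fun i hi => ?_
  simpa using (h.cond_biInter_preimage_eq_prod hf hs hμs {i} (C := C) (by simpa using hC i hi)).symm

theorem iIndepFun.measure_iInter_preimage_eq_iInf_prod [Countable ι] (h : iIndepFun f μ)
    (hf : ∀ i, Measurable (f i)) (hs : ∀ i, MeasurableSet (s i)) :
    μ (⋂ i, f i ⁻¹' s i) = ⨅ S : Finset ι, ∏ i ∈ S, μ (f i ⁻¹' s i) := by
  classical
  have := h.isProbabilityMeasure
  have hiInter : (⋂ i, f i ⁻¹' s i) = ⋂ S : Finset ι, ⋂ i ∈ S, f i ⁻¹' s i := by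
    ext x
    simp only [Set.mem_iInter]
    exact ⟨fun hx S i _ => hx i, fun hx i => hx {i} i (Finset.mem_singleton_self i)⟩
  rw [hiInter, Directed.measure_iInter]
  · exact iInf_congr fun S => h.measure_inter_preimage_eq_mul S fun i _ => hs i
  · exact fun S =>
      (MeasurableSet.biInter S.countable_toSet fun i _ => hf i (hs i)).nullMeasurableSet
  · exact fun S T => ⟨S ∪ T, Set.biInter_subset_biInter_left Finset.subset_union_left,
      Set.biInter_subset_biInter_left Finset.subset_union_right⟩
  · exact ⟨∅, measure_ne_top _ _⟩

end ProbabilityTheory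

section

variable {α : Type*} [MeasurableSpace α] {μ ν : Measure α}

theorem integrable_llr_of_ae_le [IsFiniteMeasure μ] [IsFiniteMeasure ν] (hμν : μ ≪ ν) {B : ℝ}
    (hB : ∀ᵐ x ∂μ, llr μ ν x ≤ B) : Integrable (llr μ ν) μ := by
  refine ((integrable_const |B|).add (Measure.integrable_toReal_rnDeriv (μ := ν) (ν := μ))).mono'
    (measurable_llr μ ν).aestronglyMeasurable ?_
  filter_upwards [hB, neg_llr hμν] with x hle hneg
  have hge : -(ν.rnDeriv μ x).toReal ≤ llr μ ν x := by
    have : llr ν μ x ≤ (ν.rnDeriv μ x).toReal := Real.log_le_self ENNReal.toReal_nonneg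
    simp only [Pi.neg_apply] at hneg
    linarith
  rw [Real.norm_eq_abs, abs_le, Pi.add_apply]
  constructor <;> linarith [le_abs_self B, neg_abs_le B, ENNReal.toReal_nonneg (a := ν.rnDeriv μ x)]

theorem KLdiv_le_of_ae_llr_le [IsProbabilityMeasure μ] [IsFiniteMeasure ν] (hμν : μ ≪ ν)
    {B : ℝ} (hB : ∀ᵐ x ∂μ, llr μ ν x ≤ B) : KLdiv μ ν ≤ ENNReal.ofReal B := by
  have hint := integrable_llr_of_ae_le hμν hB
  rw [KLdiv, if_pos ⟨hμν, hint⟩]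
  exact ENNReal.ofReal_le_ofReal (by simpa using integral_mono_ae hint (integrable_const B) hB)

theorem llr_cond_ae_eq [IsFiniteMeasure μ] [SigmaFinite ν] (hμν : μ ≪ ν) {s : Set α}
    (hs : MeasurableSet s) (hμs : μ s ≠ 0) :
    llr μ[|s] ν =ᵐ[μ[|s]] fun x => llr μ ν x - log (μ s).toReal := by
  have hrestr : μ.restrict s ≪ ν := (Measure.restrict_le_self).absolutelyContinuous.trans hμν
  refine Measure.smul_absolutelyContinuous.ae_le ?_
  filter_upwards [llr_smul_left hrestr _ (ENNReal.inv_ne_zero.2 (measure_ne_top μ s))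
      (ENNReal.inv_ne_top.2 hμs), hrestr.ae_le (Measure.rnDeriv_restrict μ ν hs),
      ae_restrict_mem hs] with x hsmul hrestrict hx
  rw [ProbabilityTheory.cond, hsmul, llr, llr, hrestrict, Set.indicator_of_mem hx,
    ENNReal.toReal_inv, Real.log_inv, sub_eq_add_neg]

theorem KLdiv_cond_le [IsFiniteMeasure μ] [IsFiniteMeasure ν] (hμν : μ ≪ ν) {s : Set α}
    (hs : MeasurableSet s) (hμs : μ s ≠ 0) {B : ℝ} (hB : ∀ x ∈ s, llr μ ν x ≤ B) :
    KLdiv μ[|s] ν ≤ ENNReal.ofReal (B - log (μ s).toReal) := by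
  have := cond_isProbabilityMeasure hμs
  refine KLdiv_le_of_ae_llr_le (cond_absolutelyContinuous.trans hμν) ?_
  filter_upwards [llr_cond_ae_eq hμν hs hμs, ae_cond_mem hs] with x hllr hx
  rw [hllr]
  linarith [hB x hx]

theorem lintegral_cond_le [IsFiniteMeasure μ] {s : Set α} (hs : MeasurableSet s)
    (hμs : μ s ≠ 0) {g : α → ℝ≥0∞} {c : ℝ≥0∞} (hg : ∀ x ∈ s, g x ≤ c) : ∫⁻ x, g x ∂μ[|s] ≤ c := by
  have := cond_isProbabilityMeasure hμs
  calc _ ≤ ∫⁻ _, c ∂μ[|s] := lintegral_mono_ae ((ae_cond_mem hs).mono hg)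
    _ = c := by simp

end

theorem ofReal_exp_neg_le_prod_of_tsum_le {ι : Type*} {t : ι → ℝ≥0∞} (ht0 : ∀ i, t i ≠ 0)
    (ht1 : ∀ i, t i ≤ 1) {K : ℝ} (hK : 0 ≤ K)
    (hsum : ∑' i, ENNReal.ofReal (-log (t i).toReal) ≤ ENNReal.ofReal K) (S : Finset ι) :
    ENNReal.ofReal (exp (-K)) ≤ ∏ i ∈ S, t i := by
  have ht_top (i : ι) : t i ≠ ∞ := ne_top_of_le_ne_top ENNReal.one_ne_top (ht1 i)
  have hlog_nonpos (i : ι) : log (t i).toReal ≤ 0 :=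
    log_nonpos ENNReal.toReal_nonneg
      (ENNReal.toReal_le_of_le_ofReal zero_le_one (by simpa using ht1 i))
  have hS : ∑ i ∈ S, -log (t i).toReal ≤ K := by
    rw [← ENNReal.ofReal_le_ofReal_iff hK,
      ENNReal.ofReal_sum_of_nonneg fun i _ => neg_nonneg.2 (hlog_nonpos i)]
    exact (ENNReal.sum_le_tsum S).trans hsum
  have hprod : ∏ i ∈ S, t i = ENNReal.ofReal (exp (∑ i ∈ S, log (t i).toReal)) := by
    rw [Real.exp_sum, ENNReal.ofReal_prod_of_nonneg fun i _ => (exp_pos _).le]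
    refine Finset.prod_congr rfl fun i _ => ?_
    rw [exp_log (ENNReal.toReal_pos (ht0 i) (ht_top i)), ENNReal.ofReal_toReal (ht_top i)]
  rw [Finset.sum_neg_distrib] at hS
  rw [hprod]
  exact ENNReal.ofReal_le_ofReal (exp_le_exp.2 (by linarith))

theorem mean_field_variational_error_bound_general
    (ι 𝒳 : Type) [Countable ι]
    (Θj : ι → Type) [∀ j, MeasurableSpace (Θj j)] [MeasurableSpace 𝒳]
    (C₁ C₂ C₃ : ℝ) (hC₁ : 0 < C₁) (hC₂ : 0 < C₂) (hC₃ : 0 < C₃)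
    (n : ℕ) (εn : ℝ)
    (P₀ : Measure 𝒳) (P : (∀ j, Θj j) → Measure 𝒳) (prior : Measure (∀ j, Θj j))
    (hprior : IsProbabilityMeasure prior)
    -- Q̃ is a mean-field distribution, absolutely continuous w.r.t. the prior
    (Qt : Measure (∀ j, Θj j)) (hQt : isMeanField Qt) (hQtac : Qt ≪ prior)
    -- the blocks Θ̃_j
    (Θt : ∀ j, Set (Θj j)) (hΘtmeas : ∀ j, MeasurableSet (Θt j))
    -- condition (2.7): the product set sits inside a KL-neighborhood of the truth on
    -- which the density dQ̃/dΠ is controlled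
    (hsub : {θ : ∀ j, Θj j | ∀ j, θ j ∈ Θt j} ⊆
      {θ | KLdiv P₀ (P θ) ≤ ENNReal.ofReal (C₁ * n * εn ^ 2) ∧
           Real.log ((Qt.rnDeriv prior θ).toReal) ≤ C₂ * n * εn ^ 2})
    -- condition (2.8): -∑_j log Q̃_j(Θ̃_j) ≤ C₃ n εₙ²
    (hmasspos : ∀ j, 0 < (Qt.map (fun θ => θ j)) (Θt j))
    (hmass : ∑' j, ENNReal.ofReal (-Real.log (((Qt.map (fun θ => θ j)) (Θt j)).toReal))
      ≤ ENNReal.ofReal (C₃ * n * εn ^ 2)) :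
    (⨅ Q ∈ {Q | isMeanField Q}, (KLdiv Q prior + ∫⁻ θ, KLdiv P₀ (P θ) ∂Q)) ≤
      ENNReal.ofReal ((C₁ + C₂ + C₃) * n * εn ^ 2) := by
  obtain ⟨hQt_prob, hQt_indep⟩ := hQt
  have hmeas (j : ι) : Measurable fun θ : ∀ j, Θj j => θ j := measurable_pi_apply j
  simp only [Measure.map_apply (hmeas _) (hΘtmeas _)] at hmasspos hmass
  set A := ⋂ j, (fun θ : ∀ j, Θj j => θ j) ⁻¹' Θt j
  have hA : MeasurableSet A := .iInter fun j => hmeas j (hΘtmeas j)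
  have hsubA (θ) (hθ : θ ∈ A) := hsub (Set.mem_iInter.1 hθ)
  have hQtA : ENNReal.ofReal (exp (-(C₃ * n * εn ^ 2))) ≤ Qt A := by
    rw [hQt_indep.measure_iInter_preimage_eq_iInf_prod hmeas hΘtmeas]
    exact le_iInf <| ofReal_exp_neg_le_prod_of_tsum_le (fun j => (hmasspos j).ne')
      (fun _ => prob_le_one) (by positivity) hmass
  have hQtA_ne : Qt A ≠ 0 := ((ENNReal.ofReal_pos.2 (exp_pos _)).trans_le hQtA).ne'
  have hlogA : -(C₃ * n * εn ^ 2) ≤ log (Qt A).toReal :=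
    (le_log_iff_exp_le (ENNReal.toReal_pos hQtA_ne (measure_ne_top _ _))).2
      ((ENNReal.ofReal_le_iff_le_toReal (measure_ne_top _ _)).1 hQtA)
  calc _ ≤ KLdiv Qt[|A] prior + ∫⁻ θ, KLdiv P₀ (P θ) ∂Qt[|A] :=
        iInf₂_le _ ⟨cond_isProbabilityMeasure hQtA_ne,
          hQt_indep.cond_iInter_preimage hmeas hΘtmeas hQtA_ne⟩
    _ ≤ ENNReal.ofReal (C₂ * n * εn ^ 2 - log (Qt A).toReal) +
          ENNReal.ofReal (C₁ * n * εn ^ 2) :=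
        add_le_add (KLdiv_cond_le hQtac hA hQtA_ne fun θ hθ => (hsubA θ hθ).2)
          (lintegral_cond_le hA hQtA_ne fun θ hθ => (hsubA θ hθ).1)
    _ ≤ ENNReal.ofReal (C₂ * n * εn ^ 2 + C₃ * n * εn ^ 2) +
          ENNReal.ofReal (C₁ * n * εn ^ 2) := by
        gcongr
        linarith
    _ = ENNReal.ofReal ((C₁ + C₂ + C₃) * n * εn ^ 2) := by
        rw [← ENNReal.ofReal_add (by positivity) (by positivity)]
        congr 1
        ring

/-- Theorem 2.5: a "distribution mass" condition controlling the mean-field variational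
approximation error n * inf_{Q ∈ S_MF} R(Q). -/
theorem mean_field_variational_error_bound
    (ι 𝒳 : Type) [Countable ι] [Nonempty ι]
    (Θj : ι → Type) [∀ j, MeasurableSpace (Θj j)] [MeasurableSpace 𝒳]
    (C₁ C₂ C₃ : ℝ) (hC₁ : 0 < C₁) (hC₂ : 0 < C₂) (hC₃ : 0 < C₃)
    (n : ℕ) (εn : ℝ) (hεn : 0 < εn)
    (P₀ : Measure 𝒳) (P : (∀ j, Θj j) → Measure 𝒳) (prior : Measure (∀ j, Θj j))
    (hP₀ : IsProbabilityMeasure P₀) (hprior : IsProbabilityMeasure prior)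
    (hP : ∀ θ, IsProbabilityMeasure (P θ))
    -- Q̃ is a mean-field distribution, absolutely continuous w.r.t. the prior
    (Qt : Measure (∀ j, Θj j)) (hQt : isMeanField Qt) (hQtac : Qt ≪ prior)
    -- the blocks Θ̃_j
    (Θt : ∀ j, Set (Θj j)) (hΘtmeas : ∀ j, MeasurableSet (Θt j))
    -- condition (2.7): the product set sits inside a KL-neighborhood of the truth on
    -- which the density dQ̃/dΠ is controlled
    (hsub : {θ : ∀ j, Θj j | ∀ j, θ j ∈ Θt j} ⊆
      {θ | KLdiv P₀ (P θ) ≤ ENNReal.ofReal (C₁ * n * εn ^ 2) ∧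
           Real.log ((Qt.rnDeriv prior θ).toReal) ≤ C₂ * n * εn ^ 2})
    -- condition (2.8): -∑_j log Q̃_j(Θ̃_j) ≤ C₃ n εₙ²
    (hmasspos : ∀ j, 0 < (Qt.map (fun θ => θ j)) (Θt j))
    (hmass : ∑' j, ENNReal.ofReal (-Real.log (((Qt.map (fun θ => θ j)) (Θt j)).toReal))
      ≤ ENNReal.ofReal (C₃ * n * εn ^ 2)) :
    (⨅ Q ∈ {Q | isMeanField Q}, (KLdiv Q prior + ∫⁻ θ, KLdiv P₀ (P θ) ∂Q)) ≤
      ENNReal.ofReal ((C₁ + C₂ + C₃) * n * εn ^ 2) :=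
  mean_field_variational_error_bound_general ι 𝒳 Θj C₁ C₂ C₃ hC₁ hC₂ hC₃ n εn P₀ P prior hprior Qt
    hQt hQtac Θt hΘtmeas hsub hmasspos hmass
end
end

section
/- In the Gaussian sequence model with the sieve prior, define the class S_EB = {Q : dQ = ∏_{j=1}^k dQ_j(θ_j) ∏_{j>k} δ_0(θ_j) dθ_j for some positive integer k, with each Q_j absolutely continuous with respect to Lebesgue measure}. Then the empirical Bayes posterior Q̂_EB — the product measure with coordinates q_j = f̃_j for j ≤ k̂ and q_j = δ_0 for j > k̂, where f̃_j(θ_j) ∝ f_j(θ_j) exp(−n(θ_j − Y_j)²/2) and k̂ = argmax_k π(k|Y) — minimizes the Kullback–Leibler divergence D(Q‖Π(·|Y)) over Q ∈ S_EB; that is, Q̂_EB is exactly the variational posterior with respect to the class S_EB. -/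
open MeasureTheory ProbabilityTheory Real
open scoped ENNReal NNReal

noncomputable section

def posterior {Θ 𝒳 : Type*} [MeasurableSpace Θ] [MeasurableSpace 𝒳]
    (prior : Measure Θ) (p : Θ → 𝒳 → ℝ≥0∞) (X : 𝒳) : Measure Θ :=
  (∫⁻ θ, p θ X ∂prior)⁻¹ • prior.withDensity (fun θ => p θ X)

/-- extension of a finite-dimensional vector by zeros -/
def extendFin (k : ℕ) (x : Fin k → ℝ) : ℕ → ℝ := fun i => if h : i < k then x ⟨i, h⟩ else 0

/-- the sieve prior: sample k ~ π, θ_j ~ f_j for j ≤ k, θ_j = 0 for j > k -/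
def sievePrior (π' : ℕ → ℝ≥0∞) (f : ℕ → ℝ → ℝ) : Measure (ℕ → ℝ) :=
  Measure.sum fun k => π' k •
    Measure.map (extendFin k)
      (Measure.pi fun j : Fin k => volume.withDensity fun x => ENNReal.ofReal (f (j : ℕ) x))

/-- likelihood ratio dP_θ⁽ⁿ⁾/dP_0⁽ⁿ⁾ of the Gaussian sequence model -/
def gaussLik (n : ℕ) (θ Y : ℕ → ℝ) : ℝ≥0∞ :=
  ENNReal.ofReal (Real.exp ((n : ℝ) * ∑' j, θ j * Y j - (n : ℝ) / 2 * ∑' j, θ j ^ 2))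

/-- posterior of the Gaussian sequence model with a sieve prior -/
def gaussPosterior (n : ℕ) (π' : ℕ → ℝ≥0∞) (f : ℕ → ℝ → ℝ) (Y : ℕ → ℝ) :
    Measure (ℕ → ℝ) :=
  posterior (sievePrior π' f) (gaussLik n) Y

/-- mean-field class: probability measures under which all coordinates are independent -/
def isMeanFieldSeq (Q : Measure (ℕ → ℝ)) : Prop :=
  IsProbabilityMeasure Q ∧
    iIndepFun (fun j (y : ℕ → ℝ) => y j) Q

/-- Sobolev ball Θ_α(B) (coordinates are 0-indexed: θ i is the (i+1)-st coordinate) -/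
def sobolevBall (α B : ℝ) : Set (ℕ → ℝ) :=
  {θ | ∑' j : ℕ, ((j : ℝ) + 1) ^ (2 * α) * θ j ^ 2 ≤ B ^ 2}

/-- P is the Gaussian sequence model P_θ⁽ⁿ⁾ = ⊗_j N(θ_j, 1/n) -/
def isGaussianSeqModel (n : ℕ) (θ : ℕ → ℝ) (P : Measure (ℕ → ℝ)) : Prop :=
  IsProbabilityMeasure P ∧
    iIndepFun (fun j (y : ℕ → ℝ) => y j) P ∧
    ∀ j, P.map (fun y => y j) = gaussianReal (θ j) ((n : ℝ≥0))⁻¹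

/-- k₀ = ⌈(n / log n)^{1/(2α+1)}⌉ -/
def k0def (α : ℝ) (n : ℕ) : ℕ := ⌈((n : ℝ) / Real.log n) ^ (1 / (2 * α + 1))⌉₊

/-- Qhat is a mean-field variational posterior for the Gaussian sequence model -/
def isMFVarPosterior (n : ℕ) (π' : ℕ → ℝ≥0∞) (f : ℕ → ℝ → ℝ)
    (Qhat : (ℕ → ℝ) → Measure (ℕ → ℝ)) : Prop :=
  ∀ Y, isMeanFieldSeq (Qhat Y) ∧ ∀ Q, isMeanFieldSeq Q →
    KLdiv (Qhat Y) (gaussPosterior n π' f Y) ≤ KLdiv Q (gaussPosterior n π' f Y)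


/-- normalizing constant W_j = ∫ f_j(x) exp(-n(x - Y_j)²/2) dx -/
def Wnorm (n : ℕ) (f : ℕ → ℝ → ℝ) (Y : ℕ → ℝ) (j : ℕ) : ℝ≥0∞ :=
  ∫⁻ x, ENNReal.ofReal (f j x * Real.exp (-(n : ℝ) / 2 * (x - Y j) ^ 2))

/-- the coordinatewise posterior f̃_j(θ_j) ∝ f_j(θ_j) exp(-n(θ_j - Y_j)²/2) -/
def tildeF (n : ℕ) (f : ℕ → ℝ → ℝ) (Y : ℕ → ℝ) (j : ℕ) : Measure ℝ :=
  (Wnorm n f Y j)⁻¹ •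
    volume.withDensity fun x =>
      ENNReal.ofReal (f j x * Real.exp (-(n : ℝ) / 2 * (x - Y j) ^ 2))

/-- unnormalized posterior weight of the model dimension k,
π(k) ∏_{j≤k} ∫ f_j(θ) exp(-n(θ-Y_j)²/2) dθ ∏_{j≤k} exp(n Y_j²/2); the common factor
∏_{j} exp(-n Y_j²/2) of the Bayes formula has been divided out. -/
def dimWeight (n : ℕ) (π' : ℕ → ℝ≥0∞) (f : ℕ → ℝ → ℝ) (Y : ℕ → ℝ) (k : ℕ) : ℝ≥0∞ :=
  π' k * ∏ j ∈ Finset.range k,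
    (Wnorm n f Y j * ENNReal.ofReal (Real.exp ((n : ℝ) * Y j ^ 2 / 2)))

/-- π(k|Y), the posterior probability of the model dimension -/
def dimPost (n : ℕ) (π' : ℕ → ℝ≥0∞) (f : ℕ → ℝ → ℝ) (Y : ℕ → ℝ) (k : ℕ) : ℝ≥0∞ :=
  dimWeight n π' f Y k / ∑' m, dimWeight n π' f Y m

/-- the class S_EB: product measures with finitely many absolutely continuous
coordinates followed by Dirac masses at zero -/
def inSEB (Q : Measure (ℕ → ℝ)) : Prop :=
  ∃ (k : ℕ) (ν : Fin k → Measure ℝ),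
    (∀ i, IsProbabilityMeasure (ν i)) ∧ (∀ i, ν i ≪ volume) ∧
    Q = Measure.map (extendFin k) (Measure.pi ν)

/-!
Let `Q_k` be the empirical Bayes posterior of dimension `k`: the product of the `f̃_j`, `j < k`,
padded with zeros. Bayes' formula factorises over the coordinates, so the posterior is the mixture
`Π(·|Y) = ∑ₖ π(k|Y) • Q_k`. Since the `f̃_j` have no atoms, `Q_k` lives on the slice of sequences
vanishing from index `k` on but not at index `k - 1`; these slices are pairwise disjoint, and every
`Q ∈ S_EB` with `k` absolutely continuous coordinates lives on the `k`-th one. There the posterior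
is just `π(k|Y) • Q_k`, hence `D(Q‖Π(·|Y)) = D(Q‖Q_k) - log π(k|Y) ≥ -log π(k|Y)`, with equality
for `Q = Q_k`; and `-log π(k|Y)` is smallest at `k = k̂`.
-/

section MeasureLemmas

variable {Ω Ω' : Type*} [MeasurableSpace Ω] [MeasurableSpace Ω']

theorem MeasureTheory.lintegral_fin_nat_prod_eq_prod {n : ℕ} {X : Fin n → Type*}
    [∀ i, MeasurableSpace (X i)] {μ : (i : Fin n) → Measure (X i)} [∀ i, SigmaFinite (μ i)]
    {g : (i : Fin n) → X i → ℝ≥0∞} (hg : ∀ i, Measurable (g i)) :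
    ∫⁻ x, ∏ i, g i (x i) ∂Measure.pi μ = ∏ i, ∫⁻ y, g i y ∂μ i := by
  induction n with
  | zero => simp
  | succ n ih =>
    calc ∫⁻ x, ∏ i, g i (x i) ∂Measure.pi μ
        = ∫⁻ x : X 0 × ((i : Fin n) → X i.succ), g 0 x.1 * ∏ i : Fin n, g i.succ (x.2 i)
            ∂(μ 0).prod (Measure.pi fun i => μ i.succ) := by
          rw [← (measurePreserving_piFinSuccAbove μ 0).symm.lintegral_comp_emb
            (MeasurableEquiv.measurableEmbedding _)]
          simp_rw [Fin.prod_univ_succ]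
          rfl
      _ = (∫⁻ y, g 0 y ∂μ 0) * ∏ i : Fin n, ∫⁻ y, g i.succ y ∂μ i.succ := by
          rw [lintegral_prod_mul (f := g 0)
            (g := fun z : (i : Fin n) → X i.succ => ∏ i : Fin n, g i.succ (z i)) (hg 0).aemeasurable
            (Finset.measurable_prod _ fun i _ => (hg _).comp (measurable_pi_apply i)).aemeasurable,
            ih fun i => hg i.succ]
      _ = ∏ i, ∫⁻ y, g i y ∂μ i := (Fin.prod_univ_succ fun i => ∫⁻ y, g i y ∂μ i).symm

theorem MeasureTheory.Measure.pi_withDensity {n : ℕ} {X : Fin n → Type*}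
    [∀ i, MeasurableSpace (X i)] {μ : (i : Fin n) → Measure (X i)} [∀ i, SigmaFinite (μ i)]
    {g : (i : Fin n) → X i → ℝ≥0∞} (hg : ∀ i, Measurable (g i))
    [∀ i, SigmaFinite ((μ i).withDensity (g i))] :
    Measure.pi (fun i => (μ i).withDensity (g i)) =
      (Measure.pi μ).withDensity fun x => ∏ i, g i (x i) := by
  refine Measure.pi_eq fun s hs => ?_
  rw [withDensity_apply _ (MeasurableSet.univ_pi hs), Measure.restrict_pi_pi,
    lintegral_fin_nat_prod_eq_prod hg]
  exact Finset.prod_congr rfl fun i _ => (withDensity_apply _ (hs i)).symm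

theorem MeasureTheory.Measure.pi_smul {n : ℕ} {X : Fin n → Type*} [∀ i, MeasurableSpace (X i)]
    {μ : (i : Fin n) → Measure (X i)} [∀ i, SigmaFinite (μ i)] {c : Fin n → ℝ≥0∞}
    [∀ i, SigmaFinite (c i • μ i)] :
    Measure.pi (fun i => c i • μ i) = (∏ i, c i) • Measure.pi μ := by
  refine Measure.pi_eq fun s hs => ?_
  simp only [Measure.smul_apply, Measure.pi_pi, smul_eq_mul, Finset.prod_mul_distrib]

theorem MeasureTheory.Measure.sum_restrict_eq_of_null {ι : Type*} {μ : ι → Measure Ω} {S : Set Ω}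
    (hS : MeasurableSet S) (k : ι) (h : ∀ m ≠ k, μ m S = 0) :
    (Measure.sum μ).restrict S = (μ k).restrict S := by
  ext s hs
  rw [Measure.restrict_apply hs, Measure.sum_apply _ (hs.inter hS), Measure.restrict_apply hs]
  exact tsum_eq_single k fun m hm => measure_mono_null Set.inter_subset_right (h m hm)

theorem MeasurableEmbedding.withDensity_map {g : Ω → Ω'} (hg : MeasurableEmbedding g)
    (μ : Measure Ω) (F : Ω' → ℝ≥0∞) :
    (μ.map g).withDensity F = (μ.withDensity (F ∘ g)).map g := by
  ext s hs
  rw [withDensity_apply _ hs, hg.restrict_map, hg.lintegral_map, hg.map_apply,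
    withDensity_apply _ (hg.measurable hs), Function.comp_def]

end MeasureLemmas

section KLdiv

variable {Ω : Type*} [MeasurableSpace Ω]

theorem KLdiv_restrict_of_measure_compl_eq_zero {P ρ : Measure Ω} [SigmaFinite P] [SigmaFinite ρ]
    {S : Set Ω} (hS : MeasurableSet S) (hP : P Sᶜ = 0) :
    KLdiv P (ρ.restrict S) = KLdiv P ρ := by
  have hPS : P.restrict S = P := Measure.restrict_eq_self_of_ae_mem (ae_iff.mpr hP)
  have hac_iff : P ≪ ρ.restrict S ↔ P ≪ ρ :=
    ⟨fun h => h.trans Measure.restrict_le_self.absolutelyContinuous,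
      fun h => hPS ▸ h.restrict S⟩
  by_cases hac : P ≪ ρ
  swap
  · simp only [KLdiv, hac, hac_iff, false_and, if_false]
  have hdens : P = (ρ.restrict S).withDensity (P.rnDeriv ρ) := by
    rw [← restrict_withDensity hS, Measure.withDensity_rnDeriv_eq P ρ hac, hPS]
  have hrn : P.rnDeriv (ρ.restrict S) =ᵐ[P] P.rnDeriv ρ := by
    have h := Measure.rnDeriv_withDensity (ρ.restrict S) (Measure.measurable_rnDeriv P ρ)
    rw [← hdens] at h
    exact (hac_iff.mpr hac).ae_le h
  have hllr : llr P (ρ.restrict S) =ᵐ[P] llr P ρ := hrn.mono fun x hx => by simp only [llr, hx]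
  simp only [KLdiv, integral_congr_ae hllr]
  classical
  exact if_congr (and_congr hac_iff (integrable_congr hllr)) rfl rfl

theorem KLdiv_smul_right {P μ : Measure Ω} [IsProbabilityMeasure P] [IsProbabilityMeasure μ]
    {c : ℝ≥0∞} (hc0 : c ≠ 0) (hc1 : c ≤ 1) :
    KLdiv P (c • μ) = InformationTheory.klDiv P μ + ENNReal.ofReal (-Real.log c.toReal) := by
  have hc_top : c ≠ ∞ := (hc1.trans_lt ENNReal.one_lt_top).ne
  have hac_iff : P ≪ c • μ ↔ P ≪ μ :=
    ⟨fun h => h.trans (Measure.AbsolutelyContinuous.rfl.smul_left c), fun h => h.smul_right hc0⟩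
  by_cases hac : P ≪ μ
  swap
  · simp [KLdiv, hac_iff, hac]
  have hllr := llr_smul_right hac c hc0 hc_top
  have hint_iff : Integrable (llr P (c • μ)) P ↔ Integrable (llr P μ) P := by
    simp_rw [integrable_congr hllr, sub_eq_add_neg]
    exact integrable_add_const_iff
  by_cases hint : Integrable (llr P μ) P
  swap
  · simp [KLdiv, hint_iff, hint]
  have hgibbs : 0 ≤ ∫ x, llr P μ x ∂P := by
    simpa using InformationTheory.integral_llr_add_sub_measure_univ_nonneg hac hint
  have hlog : 0 ≤ -Real.log c.toReal := by
    have : c.toReal ≤ 1 := by simpa using ENNReal.toReal_mono ENNReal.one_ne_top hc1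
    exact neg_nonneg.mpr (Real.log_nonpos ENNReal.toReal_nonneg this)
  rw [KLdiv, if_pos ⟨hac_iff.mpr hac, hint_iff.mpr hint⟩,
    InformationTheory.klDiv_of_ac_of_integrable hac hint, integral_congr_ae hllr,
    integral_sub hint (integrable_const _)]
  simp only [integral_const, probReal_univ, smul_eq_mul, one_mul, add_sub_cancel_right]
  rw [← ENNReal.ofReal_add hgibbs hlog, sub_eq_add_neg]

theorem KLdiv_smul_self_le_KLdiv_smul {P μ ν : Measure Ω} [IsProbabilityMeasure P]
    [IsProbabilityMeasure μ] [IsProbabilityMeasure ν] {c d : ℝ≥0∞} (hcd : c ≤ d) (hd : d ≤ 1) :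
    KLdiv μ (d • μ) ≤ KLdiv P (c • ν) := by
  rcases eq_or_ne c 0 with rfl | hc0
  · have h_top : KLdiv P 0 = ∞ :=
      if_neg fun h => IsProbabilityMeasure.ne_zero P (Measure.absolutelyContinuous_zero_iff.mp h.1)
    rw [zero_smul, h_top]
    exact le_top
  have hd0 : d ≠ 0 := ne_bot_of_le_ne_bot hc0 hcd
  have hd_top : d ≠ ∞ := (hd.trans_lt ENNReal.one_lt_top).ne
  rw [KLdiv_smul_right hd0 hd, KLdiv_smul_right hc0 (hcd.trans hd),
    InformationTheory.klDiv_self, zero_add]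
  refine le_add_left (ENNReal.ofReal_le_ofReal (neg_le_neg (Real.log_le_log ?_ ?_)))
  · exact ENNReal.toReal_pos hc0 (ne_top_of_le_ne_top hd_top hcd)
  · exact ENNReal.toReal_mono hd_top hcd

end KLdiv

section SieveModel

variable {n : ℕ} {f : ℕ → ℝ → ℝ} {Y : ℕ → ℝ}

theorem extendFin_coe {k : ℕ} (x : Fin k → ℝ) (i : Fin k) : extendFin k x i = x i :=
  dif_pos i.isLt

theorem extendFin_of_le {k j : ℕ} (x : Fin k → ℝ) (h : k ≤ j) : extendFin k x j = 0 :=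
  dif_neg (not_lt.mpr h)

theorem measurable_extendFin (k : ℕ) : Measurable (extendFin k) :=
  measurable_pi_lambda _ fun j => by
    unfold extendFin
    split_ifs
    exacts [measurable_pi_apply _, measurable_const]

theorem measurableEmbedding_extendFin (k : ℕ) : MeasurableEmbedding (extendFin k) := by
  have hrange : Set.range (extendFin k) = {θ | extendFin k (fun i => θ i) = θ} := by
    ext θ
    constructor
    · rintro ⟨x, rfl⟩
      simp [extendFin_coe]
    · exact fun h => ⟨_, h⟩
  refine .of_measurable_inverse (measurable_extendFin k) ?_
    (measurable_pi_lambda _ fun i => measurable_pi_apply (i : ℕ)) fun x => funext (extendFin_coe x)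
  rw [hrange]
  exact measurableSet_eq_fun ((measurable_extendFin k).comp
    (measurable_pi_lambda _ fun i => measurable_pi_apply (i : ℕ))) measurable_id

theorem tsum_extendFin {k : ℕ} (x : Fin k → ℝ) (h : ℕ → ℝ → ℝ) (h0 : ∀ j, h j 0 = 0) :
    ∑' j, h j (extendFin k x j) = ∑ i : Fin k, h i (x i) := by
  rw [tsum_eq_sum (s := Finset.range k) fun j hj => by
    rw [extendFin_of_le x (by simpa using hj), h0], ← Fin.sum_univ_eq_sum_range]
  simp only [extendFin_coe]

variable (n Y) in
def gaussLikCoord (j : ℕ) (t : ℝ) : ℝ≥0∞ :=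
  ENNReal.ofReal (Real.exp ((n : ℝ) * (t * Y j) - (n : ℝ) / 2 * t ^ 2))

theorem measurable_gaussLikCoord (j : ℕ) : Measurable (gaussLikCoord n Y j) := by
  unfold gaussLikCoord
  fun_prop

theorem gaussLik_extendFin {k : ℕ} (x : Fin k → ℝ) :
    gaussLik n (extendFin k x) Y = ∏ i : Fin k, gaussLikCoord n Y i (x i) := by
  rw [gaussLik, tsum_extendFin x (fun j t => t * Y j) (by simp),
    tsum_extendFin x (fun j t => t ^ 2) (by simp), Finset.mul_sum, Finset.mul_sum,
    ← Finset.sum_sub_distrib, Real.exp_sum,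
    ENNReal.ofReal_prod_of_nonneg fun _ _ => (Real.exp_pos _).le]
  rfl

theorem Wnorm_ne_top {j : ℕ} (hf : Integrable (f j)) : Wnorm n f Y j ≠ ∞ := by
  refine ne_top_of_le_ne_top hf.lintegral_lt_top.ne (lintegral_mono fun x => ?_)
  rw [ENNReal.ofReal_mul' (Real.exp_pos _).le]
  refine mul_le_of_le_one_right' (ENNReal.ofReal_le_one.mpr (Real.exp_le_one_iff.mpr ?_))
  have := sq_nonneg (x - Y j)
  have : (0 : ℝ) ≤ n := n.cast_nonneg
  nlinarith

theorem isProbabilityMeasure_tildeF {j : ℕ} (hf : Integrable (f j)) (hW : Wnorm n f Y j ≠ 0) :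
    IsProbabilityMeasure (tildeF n f Y j) := by
  constructor
  rw [tildeF, Measure.smul_apply, withDensity_apply _ MeasurableSet.univ, Measure.restrict_univ]
  exact ENNReal.inv_mul_cancel hW (Wnorm_ne_top hf)

theorem tildeF_absolutelyContinuous (j : ℕ) : tildeF n f Y j ≪ volume :=
  (withDensity_absolutelyContinuous _ _).smul_left _

theorem withDensity_gaussLikCoord {j : ℕ} (hf : Integrable (f j)) (hW : Wnorm n f Y j ≠ 0) :
    (volume.withDensity fun x => ENNReal.ofReal (f j x)).withDensity (gaussLikCoord n Y j) =
      (Wnorm n f Y j * ENNReal.ofReal (Real.exp ((n : ℝ) * Y j ^ 2 / 2))) • tildeF n f Y j := by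
  rw [← withDensity_mul₀ hf.aemeasurable.ennreal_ofReal (measurable_gaussLikCoord j).aemeasurable]
  have hdens : (fun x => ENNReal.ofReal (f j x)) * gaussLikCoord n Y j =
      ENNReal.ofReal (Real.exp ((n : ℝ) * Y j ^ 2 / 2)) •
        fun x => ENNReal.ofReal (f j x * Real.exp (-(n : ℝ) / 2 * (x - Y j) ^ 2)) := by
    funext x
    -- completing the square: `n t Y - n t² / 2 = n Y² / 2 - n (t - Y)² / 2`
    simp only [Pi.mul_apply, Pi.smul_apply, smul_eq_mul, gaussLikCoord]
    rw [← ENNReal.ofReal_mul' (Real.exp_pos _).le, ← ENNReal.ofReal_mul (Real.exp_pos _).le,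
      mul_left_comm (Real.exp _), ← Real.exp_add]
    congr 3
    ring
  rw [hdens, withDensity_smul' _ _ ENNReal.ofReal_ne_top, tildeF, smul_smul, mul_right_comm,
    ENNReal.mul_inv_cancel hW (Wnorm_ne_top hf), one_mul]

variable (n f Y) in
def ebPosterior (k : ℕ) : Measure (ℕ → ℝ) :=
  (Measure.pi fun i : Fin k => tildeF n f Y i).map (extendFin k)

theorem map_extendFin_pi_withDensity_gaussLik (hf : ∀ j, Integrable (f j))
    (hW : ∀ j, Wnorm n f Y j ≠ 0) (k : ℕ) :
    ((Measure.pi fun j : Fin k => volume.withDensity fun x => ENNReal.ofReal (f j x)).map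
        (extendFin k)).withDensity (fun θ => gaussLik n θ Y) =
      (∏ j ∈ Finset.range k, (Wnorm n f Y j * ENNReal.ofReal (Real.exp ((n : ℝ) * Y j ^ 2 / 2))))
        • ebPosterior n f Y k := by
  have hc : ∀ j, Wnorm n f Y j * ENNReal.ofReal (Real.exp ((n : ℝ) * Y j ^ 2 / 2)) ≠ ∞ :=
    fun j => ENNReal.mul_ne_top (Wnorm_ne_top (hf j)) ENNReal.ofReal_ne_top
  have := fun j => isFiniteMeasure_withDensity_ofReal (hf j).hasFiniteIntegral
  have := fun j => isProbabilityMeasure_tildeF (hf j) (hW j)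
  have := fun j => Measure.smul_finite (tildeF n f Y j) (hc j)
  have : ∀ j, SigmaFinite ((volume.withDensity fun x => ENNReal.ofReal (f j x)).withDensity
      (gaussLikCoord n Y j)) := fun j => by
    rw [withDensity_gaussLikCoord (hf j) (hW j)]
    infer_instance
  rw [(measurableEmbedding_extendFin k).withDensity_map, Function.comp_def]
  simp_rw [gaussLik_extendFin]
  rw [← Measure.pi_withDensity fun i => measurable_gaussLikCoord i]
  simp_rw [withDensity_gaussLikCoord (hf _) (hW _)]
  rw [Measure.pi_smul, Measure.map_smul, Fin.prod_univ_eq_prod_range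
    (fun j => Wnorm n f Y j * ENNReal.ofReal (Real.exp ((n : ℝ) * Y j ^ 2 / 2)))]
  rfl

theorem isProbabilityMeasure_ebPosterior (hf : ∀ j, Integrable (f j))
    (hW : ∀ j, Wnorm n f Y j ≠ 0) (k : ℕ) : IsProbabilityMeasure (ebPosterior n f Y k) :=
  have := fun j => isProbabilityMeasure_tildeF (hf j) (hW j)
  Measure.isProbabilityMeasure_map (measurable_extendFin k).aemeasurable

variable {π' : ℕ → ℝ≥0∞}

theorem sievePrior_withDensity_gaussLik (hf : ∀ j, Integrable (f j))
    (hW : ∀ j, Wnorm n f Y j ≠ 0) :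
    (sievePrior π' f).withDensity (fun θ => gaussLik n θ Y) =
      Measure.sum fun k => dimWeight n π' f Y k • ebPosterior n f Y k := by
  rw [sievePrior, withDensity_sum]
  congr 1
  funext k
  rw [withDensity_smul_measure, map_extendFin_pi_withDensity_gaussLik hf hW, dimWeight, smul_smul]

theorem gaussPosterior_eq_sum (hf : ∀ j, Integrable (f j)) (hW : ∀ j, Wnorm n f Y j ≠ 0) :
    gaussPosterior n π' f Y = Measure.sum fun k => dimPost n π' f Y k • ebPosterior n f Y k := by
  have := isProbabilityMeasure_ebPosterior hf hW
  have hZ : ∫⁻ θ, gaussLik n θ Y ∂sievePrior π' f = ∑' k, dimWeight n π' f Y k := by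
    rw [← setLIntegral_univ, ← withDensity_apply _ .univ, sievePrior_withDensity_gaussLik hf hW,
      Measure.sum_apply _ .univ]
    simp
  rw [gaussPosterior, _root_.posterior, hZ, sievePrior_withDensity_gaussLik hf hW]
  ext s hs
  simp only [Measure.smul_apply, Measure.sum_apply _ hs, smul_eq_mul, dimPost, div_eq_mul_inv,
    ← ENNReal.tsum_mul_left]
  congr 1
  funext k
  ring

theorem dimPost_le_one (k : ℕ) : dimPost n π' f Y k ≤ 1 :=
  ENNReal.div_le_of_le_mul (by rw [one_mul]; exact ENNReal.le_tsum k)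

-- `j + 1 = k` rather than `j = k - 1`, so that the second condition is void for `k = 0`
def dimSlice (k : ℕ) : Set (ℕ → ℝ) :=
  {θ | (∀ j, k ≤ j → θ j = 0) ∧ ∀ j, j + 1 = k → θ j ≠ 0}

theorem measurableSet_dimSlice (k : ℕ) : MeasurableSet (dimSlice k) := by
  unfold dimSlice
  measurability

theorem disjoint_dimSlice {k m : ℕ} (h : k ≠ m) : Disjoint (dimSlice k) (dimSlice m) := by
  wlog hkm : k < m generalizing k m
  · exact (this h.symm (lt_of_le_of_ne (not_lt.mp hkm) h.symm)).symm
  exact Set.disjoint_left.mpr fun θ hk hm => hm.2 (m - 1) (by omega) (hk.1 _ (by omega))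

theorem map_extendFin_pi_dimSlice_compl {k : ℕ} (ν : Fin k → Measure ℝ) [∀ i, SigmaFinite (ν i)]
    (h0 : ∀ i, ν i {0} = 0) : (Measure.pi ν).map (extendFin k) (dimSlice k)ᶜ = 0 := by
  rw [Measure.map_apply (measurable_extendFin k) (measurableSet_dimSlice k).compl]
  refine measure_mono_null (t := ⋃ i, Function.eval i ⁻¹' {0}) ?_
    (measure_iUnion_null fun i => Measure.pi_eval_preimage_null _ (h0 i))
  intro x hx
  simp only [dimSlice, Set.mem_preimage, Set.mem_compl_iff, Set.mem_ofPred_eq, not_and,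
    not_forall, not_not] at hx
  obtain ⟨j, hj, hxj⟩ := hx fun j hj => extendFin_of_le x hj
  exact Set.mem_iUnion.mpr ⟨⟨j, by omega⟩, (extendFin_coe x ⟨j, by omega⟩).symm.trans hxj⟩

theorem ebPosterior_dimSlice_compl (hf : ∀ j, Integrable (f j)) (hW : ∀ j, Wnorm n f Y j ≠ 0)
    (k : ℕ) : ebPosterior n f Y k (dimSlice k)ᶜ = 0 :=
  have := fun j => isProbabilityMeasure_tildeF (hf j) (hW j)
  map_extendFin_pi_dimSlice_compl _ fun i => tildeF_absolutelyContinuous i Real.volume_singleton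

theorem ebPosterior_dimSlice_of_ne (hf : ∀ j, Integrable (f j)) (hW : ∀ j, Wnorm n f Y j ≠ 0)
    {k m : ℕ} (h : m ≠ k) : ebPosterior n f Y m (dimSlice k) = 0 :=
  measure_mono_null (disjoint_dimSlice h.symm).subset_compl_right
    (ebPosterior_dimSlice_compl hf hW m)

theorem KLdiv_gaussPosterior_of_dimSlice (hf : ∀ j, Integrable (f j))
    (hW : ∀ j, Wnorm n f Y j ≠ 0) {P : Measure (ℕ → ℝ)} [IsProbabilityMeasure P] {k : ℕ}
    (hP : P (dimSlice k)ᶜ = 0) :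
    KLdiv P (gaussPosterior n π' f Y) = KLdiv P (dimPost n π' f Y k • ebPosterior n f Y k) := by
  have := isProbabilityMeasure_ebPosterior hf hW
  have : ∀ m, IsFiniteMeasure (dimPost n π' f Y m • ebPosterior n f Y m) := fun m =>
    Measure.smul_finite _ (ne_top_of_le_ne_top ENNReal.one_ne_top (dimPost_le_one m))
  have : IsFiniteMeasure (gaussPosterior n π' f Y) := by
    constructor
    rw [gaussPosterior_eq_sum hf hW, Measure.sum_apply _ .univ]
    simp only [Measure.smul_apply, measure_univ, smul_eq_mul, mul_one, dimPost, div_eq_mul_inv,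
      ENNReal.tsum_mul_right]
    exact (ENNReal.mul_inv_le_one _).trans_lt ENNReal.one_lt_top
  have hS := measurableSet_dimSlice k
  calc KLdiv P (gaussPosterior n π' f Y)
      = KLdiv P ((gaussPosterior n π' f Y).restrict (dimSlice k)) :=
        (KLdiv_restrict_of_measure_compl_eq_zero hS hP).symm
    _ = KLdiv P ((dimPost n π' f Y k • ebPosterior n f Y k).restrict (dimSlice k)) := by
        rw [gaussPosterior_eq_sum hf hW, Measure.sum_restrict_eq_of_null hS k fun m hm => by
          rw [Measure.smul_apply, ebPosterior_dimSlice_of_ne hf hW hm, smul_zero]]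
    _ = KLdiv P (dimPost n π' f Y k • ebPosterior n f Y k) :=
        KLdiv_restrict_of_measure_compl_eq_zero hS hP

end SieveModel

theorem empirical_Bayes_is_variational_posterior_general
    (n : ℕ) (π' : ℕ → ℝ≥0∞) (f : ℕ → ℝ → ℝ)
    (hfint : ∀ j, (∫ x, f j x) = 1)
    (Y : ℕ → ℝ)
    (hW : ∀ j, 0 < Wnorm n f Y j)
    -- k̂ = argmax_k π(k|Y)
    (khat : ℕ)
    (hargmax : ∀ k : ℕ, dimPost n π' f Y k ≤ dimPost n π' f Y khat)
    -- the empirical Bayes posterior: q_j = f̃_j for j ≤ k̂ and q_j = δ₀ for j > k̂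
    (QEB : Measure (ℕ → ℝ))
    (hQEB : QEB = Measure.map (extendFin khat)
      (Measure.pi fun i : Fin khat => tildeF n f Y (i : ℕ))) :
    -- QEB belongs to S_EB and minimizes the KL divergence to the posterior over S_EB
    inSEB QEB ∧
      ∀ Q, inSEB Q →
        KLdiv QEB (gaussPosterior n π' f Y) ≤ KLdiv Q (gaussPosterior n π' f Y) := by
  have hf : ∀ j, Integrable (f j) := fun j =>
    Integrable.of_integral_ne_zero (by rw [hfint j]; exact one_ne_zero)
  have hW₀ : ∀ j, Wnorm n f Y j ≠ 0 := fun j => (hW j).ne'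
  have := fun j => isProbabilityMeasure_tildeF (hf j) (hW₀ j)
  obtain rfl : QEB = ebPosterior n f Y khat := hQEB
  refine ⟨⟨khat, _, inferInstance, fun i => tildeF_absolutelyContinuous i, rfl⟩, ?_⟩
  rintro Q ⟨k, ν, hν, hνac, rfl⟩
  have := isProbabilityMeasure_ebPosterior hf hW₀
  have : IsProbabilityMeasure ((Measure.pi ν).map (extendFin k)) :=
    Measure.isProbabilityMeasure_map (measurable_extendFin k).aemeasurable
  rw [KLdiv_gaussPosterior_of_dimSlice hf hW₀ (ebPosterior_dimSlice_compl hf hW₀ khat),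
    KLdiv_gaussPosterior_of_dimSlice hf hW₀
      (map_extendFin_pi_dimSlice_compl ν fun i => hνac i Real.volume_singleton)]
  exact KLdiv_smul_self_le_KLdiv_smul (hargmax k) (dimPost_le_one khat)

/-- Theorem 5.3: the empirical Bayes posterior is exactly the variational posterior
with respect to the class S_EB. -/
theorem empirical_Bayes_is_variational_posterior
    (n : ℕ) (hn : 1 ≤ n) (π' : ℕ → ℝ≥0∞) (f : ℕ → ℝ → ℝ)
    (hπ : (∑' k, π' k) = 1)
    (hfmeas : ∀ j, Measurable (f j)) (hfpos : ∀ j x, 0 ≤ f j x)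
    (hfint : ∀ j, (∫ x, f j x) = 1)
    (Y : ℕ → ℝ)
    (hW : ∀ j, 0 < Wnorm n f Y j)
    -- k̂ = argmax_k π(k|Y)
    (khat : ℕ)
    (hargmax : ∀ k : ℕ, dimPost n π' f Y k ≤ dimPost n π' f Y khat)
    -- the empirical Bayes posterior: q_j = f̃_j for j ≤ k̂ and q_j = δ₀ for j > k̂
    (QEB : Measure (ℕ → ℝ))
    (hQEB : QEB = Measure.map (extendFin khat)
      (Measure.pi fun i : Fin khat => tildeF n f Y (i : ℕ))) :
    -- QEB belongs to S_EB and minimizes the KL divergence to the posterior over S_EB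
    inSEB QEB ∧
      ∀ Q, inSEB Q →
        KLdiv QEB (gaussPosterior n π' f Y) ≤ KLdiv Q (gaussPosterior n π' f Y) :=
  empirical_Bayes_is_variational_posterior_general n π' f hfint Y hW khat hargmax QEB hQEB
end
end
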